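/- If a set S ⊆ ℤ^n is integrally convex, then its convex hull conv(S) is a box-integer polyhedron and S = conv(S) ∩ ℤ^n. -/

import Mathlib

open Set Pointwise

noncomputable section

/-- Embedding of integer vectors into real vectors. -/
def coeZ {n : ℕ} (z : Fin n → ℤ) : Fin n → ℝ := fun i => (z i : ℝ)

/-- A (nonempty) polyhedron: solution set of a finite system of linear inequalities. -/
def IsPolyhedron {n : ℕ} (P : Set (Fin n → ℝ)) : Prop :=
  P.Nonempty ∧ ∃ (m : ℕ) (A : Matrix (Fin m) (Fin n) ℝ) (b : Fin m → ℝ),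
    P = {x | A.mulVec x ≤ b}

/-- The integer points of a set `P ⊆ ℝ^n`. -/
def intPts {n : ℕ} (P : Set (Fin n → ℝ)) : Set (Fin n → ℝ) :=
  {x ∈ P | ∀ i, ∃ z : ℤ, x i = (z : ℝ)}

/-- The box `{x : l ≤ x ≤ u}` with integral bounds. -/
def intBox {n : ℕ} (l u : Fin n → ℤ) : Set (Fin n → ℝ) :=
  {x | ∀ i, (l i : ℝ) ≤ x i ∧ x i ≤ (u i : ℝ)}

/-- A set `P ⊆ ℝ^n` is box-integer if its intersection with every integral box,
whenever nonempty, equals the convex hull of its integer points. -/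
def IsBoxInteger {n : ℕ} (P : Set (Fin n → ℝ)) : Prop :=
  ∀ l u : Fin n → ℤ, l ≤ u → (P ∩ intBox l u).Nonempty →
    P ∩ intBox l u = convexHull ℝ (intPts (P ∩ intBox l u))

/-- A set closed under multiplication by nonnegative scalars. -/
def IsConeSet {n : ℕ} (C : Set (Fin n → ℝ)) : Prop :=
  ∀ x ∈ C, ∀ lam : ℝ, 0 ≤ lam → lam • x ∈ C

/-- The characteristic (recession) cone of `P`. -/
def charCone {n : ℕ} (P : Set (Fin n → ℝ)) : Set (Fin n → ℝ) :=
  {d | ∀ x ∈ P, x + d ∈ P}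

/-- The integral neighborhood `N(x)` of a real vector `x`. -/
def intNbhd {n : ℕ} (x : Fin n → ℝ) : Set (Fin n → ℤ) :=
  {z | ∀ i, |x i - (z i : ℝ)| < 1}

/-- The convex hull (in `ℝ^n`) of a set of integer vectors. -/
def convZ {n : ℕ} (S : Set (Fin n → ℤ)) : Set (Fin n → ℝ) :=
  convexHull ℝ (coeZ '' S)

/-- A nonempty set `S ⊆ ℤ^n` is integrally convex if every point `x` of its convex hull
belongs to the convex hull of `S ∩ N(x)`. -/
def IntegrallyConvex {n : ℕ} (S : Set (Fin n → ℤ)) : Prop :=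
  S.Nonempty ∧ ∀ x ∈ convZ S, x ∈ convZ (S ∩ intNbhd x)

/-- An L♮-convex polyhedron, given by its standard inequality description. -/
def IsLNatPolyhedron {n : ℕ} (P : Set (Fin n → ℝ)) : Prop :=
  P.Nonempty ∧ ∃ (I J : Set (Fin n)) (E : Set (Fin n × Fin n))
    (l u : Fin n → ℤ) (dd : Fin n × Fin n → ℤ),
    P = {x | (∀ i ∈ I, (l i : ℝ) ≤ x i) ∧ (∀ j ∈ J, x j ≤ (u j : ℝ)) ∧
             (∀ p ∈ E, x p.2 - x p.1 ≤ (dd p : ℝ))}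

/-- An L²♮-convex polyhedron: the Minkowski sum of two L♮-convex polyhedra. -/
def IsL2NatPolyhedron {n : ℕ} (P : Set (Fin n → ℝ)) : Prop :=
  ∃ P₁ P₂ : Set (Fin n → ℝ), IsLNatPolyhedron P₁ ∧ IsLNatPolyhedron P₂ ∧ P = P₁ + P₂

/-- An M♮-convex set of integer vectors (exchange axiom). -/
def IsMNatSet {n : ℕ} (S : Set (Fin n → ℤ)) : Prop :=
  S.Nonempty ∧ ∀ x ∈ S, ∀ y ∈ S, ∀ i : Fin n, y i < x i →
    ((x - Pi.single i 1 ∈ S ∧ y + Pi.single i 1 ∈ S) ∨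
     ∃ j : Fin n, x j < y j ∧ x - Pi.single i 1 + Pi.single j 1 ∈ S ∧
       y + Pi.single i 1 - Pi.single j 1 ∈ S)

/-- An M♮-convex polyhedron: the convex hull of an M♮-convex set. -/
def IsMNatPolyhedron {n : ℕ} (P : Set (Fin n → ℝ)) : Prop :=
  ∃ S : Set (Fin n → ℤ), IsMNatSet S ∧ P = convZ S

/-- An L♮-convex set of integer vectors (closed under componentwise
rounded-up and rounded-down midpoints). -/
def IsLNatSet {n : ℕ} (S : Set (Fin n → ℤ)) : Prop :=
  S.Nonempty ∧ ∀ x ∈ S, ∀ y ∈ S,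
    (fun i => ⌈(x i + y i : ℚ) / 2⌉) ∈ S ∧ (fun i => ⌊(x i + y i : ℚ) / 2⌋) ∈ S

/-- An L²♮-convex set: the Minkowski sum of two L♮-convex sets. -/
def IsL2NatSet {n : ℕ} (S : Set (Fin n → ℤ)) : Prop :=
  ∃ S₁ S₂ : Set (Fin n → ℤ), IsLNatSet S₁ ∧ IsLNatSet S₂ ∧ S = S₁ + S₂

/-!
A point of `conv S` is a convex combination of points of `S` in its integer neighbourhood. For
an integer point that neighbourhood is the point itself, so `S = conv S ∩ ℤⁿ`; for a point of an
integral box `B` it lies in `B`, so `conv S ∩ B = conv (S ∩ B)`, which gives box-integrality.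

For polyhedrality, walk from a point of `S` towards a point `x ∉ conv S` and stop at the last
point `x₀` of `conv S`. Near `x₀`, `conv S` contains `x₀` plus small multiples of the
differences `z - v`, where `z ∈ S` is within sup-distance `1` of `x₀` and `v` carries positive
weight in a representation of `x₀` by integer neighbours; these differences lie in
`{-2, …, 2}ⁿ`. The direction of travel is therefore outside the cone they generate, and by
Fourier–Motzkin elimination it is separated from that cone by one of finitely many normals `a`
depending only on `n`. Such an `a` is maximised over the integer points near `x₀` at `x₀`,
hence over all of `S` by integral convexity, so the halfspace `a ⬝ᵥ · ≤ sup_S a` cuts off `x`.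
-/

open Matrix Filter Topology

section FourierMotzkin

open Finset

variable {𝕜 : Type*} [Field 𝕜] [LinearOrder 𝕜] [IsStrictOrderedRing 𝕜]

theorem exists_nonneg_forall_le_mul_iff {ι : Type*} (A : Finset ι) (α β : ι → 𝕜) :
    (∃ t, 0 ≤ t ∧ ∀ i ∈ A, α i ≤ t * β i) ↔
      (∀ i ∈ A, β i ≤ 0 → α i ≤ 0) ∧
        ∀ i ∈ A, ∀ j ∈ A, 0 < β i → β j < 0 → β i * α j ≤ β j * α i := by
  constructor
  · rintro ⟨t, ht, h⟩
    refine ⟨fun i hi hβ => (h i hi).trans (mul_nonpos_of_nonneg_of_nonpos ht hβ),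
      fun i hi j hj hβi hβj => ?_⟩
    nlinarith [h i hi, h j hj]
  · rintro ⟨hnonpos, hpair⟩
    classical
    set T := insert 0 ((A.filter (0 < β ·)).image fun i => α i / β i)
    have hT : T.Nonempty := insert_nonempty _ _
    refine ⟨T.max' hT, T.le_max' _ (mem_insert_self _ _), fun j hj => ?_⟩
    rcases lt_or_ge 0 (β j) with hβj | hβj
    · have := T.le_max' _ (mem_insert_of_mem (mem_image_of_mem _ (mem_filter.2 ⟨hj, hβj⟩)))
      rwa [div_le_iff₀ hβj] at this
    rcases mem_insert.1 (T.max'_mem hT) with hmax | hmax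
    · rw [hmax, zero_mul]
      exact hnonpos j hj hβj
    obtain ⟨i, hi, hmax⟩ := mem_image.1 hmax
    obtain ⟨hiA, hβi⟩ := mem_filter.1 hi
    rw [← hmax, div_mul_eq_mul_div, le_div_iff₀ hβi]
    rcases hβj.lt_or_eq with hβj | hβj
    · linarith [hpair i hiA j hj hβi hβj]
    · rw [hβj, mul_zero]
      exact mul_nonpos_of_nonpos_of_nonneg (hnonpos j hj hβj.le) hβi.le

theorem exists_finset_mem_hull_iff {n : ℕ} (D : Finset (Fin n → 𝕜)) :
    ∃ A : Finset (Fin n → 𝕜), ∀ v,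
      v ∈ PointedCone.hull 𝕜 (D : Set (Fin n → 𝕜)) ↔ ∀ a ∈ A, a ⬝ᵥ v ≤ 0 := by
  classical
  induction D using Finset.induction_on with
  | empty =>
    refine ⟨univ.image (Pi.single · 1) ∪ univ.image (Pi.single · (-1)), fun v => ?_⟩
    simp only [coe_empty, Submodule.span_empty, Submodule.mem_bot]
    constructor
    · rintro rfl
      simp
    · intro h
      funext i
      have h₁ := h _ (mem_union_left _ (mem_image_of_mem _ (mem_univ i)))
      have h₂ := h _ (mem_union_right _ (mem_image_of_mem _ (mem_univ i)))
      rw [single_dotProduct] at h₁ h₂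
      simp only [one_mul, neg_one_mul, neg_nonpos] at h₁ h₂
      exact le_antisymm h₁ h₂
  | insert d D _ ih =>
    obtain ⟨A, hA⟩ := ih
    refine ⟨A.filter (· ⬝ᵥ d ≤ 0) ∪ ((A.filter (0 < · ⬝ᵥ d)) ×ˢ (A.filter (· ⬝ᵥ d < 0))).image
      fun p => (p.1 ⬝ᵥ d) • p.2 - (p.2 ⬝ᵥ d) • p.1, fun v => ?_⟩
    have hinsert : v ∈ PointedCone.hull 𝕜 ((insert d D : Finset _) : Set (Fin n → 𝕜)) ↔
        ∃ t, 0 ≤ t ∧ ∀ a ∈ A, a ⬝ᵥ v ≤ t * (a ⬝ᵥ d) := by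
      rw [coe_insert, Submodule.mem_span_insert]
      constructor
      · rintro ⟨c, z, hz, rfl⟩
        refine ⟨c, c.2, fun a ha => ?_⟩
        have := (hA z).1 hz a ha
        rw [dotProduct_add, ← Nonneg.coe_smul, dotProduct_smul, smul_eq_mul]
        linarith
      · rintro ⟨t, ht, h⟩
        refine ⟨⟨t, ht⟩, v - t • d, (hA _).2 fun a ha => ?_, by simp⟩
        rw [dotProduct_sub, dotProduct_smul, smul_eq_mul]
        linarith [h a ha]
    rw [hinsert, exists_nonneg_forall_le_mul_iff]
    simp only [forall_mem_union, Finset.forall_mem_image, mem_filter, Finset.mem_product,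
      Prod.forall, and_imp, sub_dotProduct, smul_dotProduct, smul_eq_mul, sub_nonpos]
    exact and_congr_right' ⟨fun h i j hi hβi hj hβj => h i hi j hj hβi hβj,
      fun h i hi j hj hβi hβj => h i j hi hβi hj hβj⟩

end FourierMotzkin

section ConvexHull

variable {𝕜 E : Type*} [Field 𝕜] [LinearOrder 𝕜] [IsStrictOrderedRing 𝕜]
  [AddCommGroup E] [Module 𝕜 E]

theorem Convex.exists_add_smul_mem_of_mem_hull {C : Set E} (hC : Convex 𝕜 C) {x : E}
    (hx : x ∈ C) {D : Set E} (hD : ∀ d ∈ D, ∃ s > (0 : 𝕜), x + s • d ∈ C) {u : E}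
    (hu : u ∈ PointedCone.hull 𝕜 D) : ∃ s > (0 : 𝕜), x + s • u ∈ C := by
  induction hu using Submodule.span_induction with
  | mem d hd => exact hD d hd
  | zero => exact ⟨1, one_pos, by simpa using hx⟩
  | add u v _ _ hu hv =>
    obtain ⟨s, hs, hsu⟩ := hu
    obtain ⟨r, hr, hrv⟩ := hv
    refine ⟨s * r / (r + s), by positivity, ?_⟩
    convert hC hsu hrv (a := r / (r + s)) (b := s / (r + s)) (by positivity) (by positivity)
      (by field_simp) using 1
    match_scalars <;> field_simp
  | smul c u _ hu =>
    obtain ⟨s, hs, hsu⟩ := hu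
    rcases c.2.eq_or_lt with hc | hc
    · exact ⟨1, one_pos, by simpa [← Nonneg.coe_smul, ← hc] using hx⟩
    · refine ⟨s / c, div_pos hs hc, ?_⟩
      rwa [← Nonneg.coe_smul, smul_smul, div_mul_cancel₀ _ hc.ne']

theorem add_smul_sub_mem_convexHull {ι : Type*} [Fintype ι] {s : Set E} {z : ι → E}
    {w : ι → 𝕜} (hz : ∀ i, z i ∈ s) (hw₀ : ∀ i, 0 ≤ w i) (hw₁ : ∑ i, w i = 1) (i : ι)
    {y : E} (hy : y ∈ s) : ∑ j, w j • z j + w i • (y - z i) ∈ convexHull 𝕜 s := by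
  classical
  have hupdate : ∑ j, w j • z j + w i • (y - z i) = ∑ j, w j • Function.update z i y j := by
    rw [eq_comm, ← sub_eq_iff_eq_add', ← Finset.sum_sub_distrib]
    simp_rw [← smul_sub, Function.update_apply]
    rw [Finset.sum_eq_single i (fun j _ hj => by simp [hj]) (by simp), if_pos rfl]
  rw [hupdate]
  refine (convex_convexHull 𝕜 s).sum_mem (fun j _ => hw₀ j) hw₁ fun j _ => subset_convexHull 𝕜 s ?_
  rcases eq_or_ne j i with rfl | hj
  · simpa using hy
  · simpa [hj] using hz j

end ConvexHull

theorem Convex.exists_forall_add_smul_notMem {E : Type*} [AddCommGroup E] [Module ℝ E]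
    [TopologicalSpace E] [IsTopologicalAddGroup E] [ContinuousSMul ℝ E] {C B : Set E}
    (hC : Convex ℝ C) (hB : Convex ℝ B) (hCB : IsClosed (C ∩ B)) {y x : E} (hy : y ∈ C)
    (hyB : y ∈ B) (hxB : x ∈ B) (hx : x ∉ C) :
    ∃ z ∈ C, ∃ τ > (0 : ℝ), x = z + τ • (x - y) ∧ ∀ s > (0 : ℝ), z + s • (x - y) ∉ C := by
  set p : ℝ → E := fun t => y + t • (x - y)
  set T := Icc (0 : ℝ) 1 ∩ p ⁻¹' (C ∩ B)
  have hpB : ∀ t ∈ Icc (0 : ℝ) 1, p t ∈ B := fun t ht => hB.add_smul_sub_mem hyB hxB ht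
  have hT : IsClosed T := isClosed_Icc.inter (hCB.preimage (by fun_prop))
  have hT₀ : (0 : ℝ) ∈ T := ⟨left_mem_Icc.2 zero_le_one, by simpa [p] using ⟨hy, hyB⟩⟩
  have hTbdd : BddAbove T := ⟨1, fun t ht => ht.1.2⟩
  set t := sSup T
  have htT : t ∈ T := hT.csSup_mem ⟨0, hT₀⟩ hTbdd
  have ht₁ : t < 1 := by
    refine htT.1.2.lt_of_ne fun h => hx ?_
    simpa [p, h] using htT.2.1
  refine ⟨p t, htT.2.1, 1 - t, sub_pos.2 ht₁, by simp only [p]; module, fun s hs hmem => ?_⟩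
  set r := min s (1 - t)
  have hr : 0 < r := lt_min hs (sub_pos.2 ht₁)
  have hpr : p (t + r) ∈ C := by
    have := hC.add_smul_mem htT.2.1 hmem (t := r / s)
      ⟨by positivity, div_le_one_of_le₀ (min_le_left _ _) hs.le⟩
    convert this using 1
    simp only [p, smul_smul, div_mul_cancel₀ _ hs.ne']
    module
  have hmem' : t + r ∈ T := by
    have hIcc : t + r ∈ Icc (0 : ℝ) 1 :=
      ⟨by linarith [htT.1.1], by linarith [min_le_right s (1 - t)]⟩
    exact ⟨hIcc, hpr, hpB _ hIcc⟩
  linarith [le_csSup hTbdd hmem']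

section IntegerPoints

variable {n : ℕ}

theorem coeZ_le_coeZ {y z : Fin n → ℤ} : coeZ y ≤ coeZ z ↔ y ≤ z := by
  simp [coeZ, Pi.le_def]

theorem coeZ_sub (y z : Fin n → ℤ) : coeZ (y - z) = coeZ y - coeZ z := by
  ext
  simp [coeZ]

theorem intBox_eq_Icc (l u : Fin n → ℤ) : intBox l u = Icc (coeZ l) (coeZ u) := by
  ext
  simp [intBox, coeZ, Pi.le_def, forall_and]

theorem coeZ_mem_intBox {l u z : Fin n → ℤ} : coeZ z ∈ intBox l u ↔ z ∈ Icc l u := by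
  simp [intBox_eq_Icc, coeZ_le_coeZ]

theorem convex_intBox (l u : Fin n → ℤ) : Convex ℝ (intBox l u) := by
  rw [intBox_eq_Icc]
  exact convex_Icc _ _

theorem exists_intBox_mem_mem (x y : Fin n → ℝ) : ∃ l u, x ∈ intBox l u ∧ y ∈ intBox l u :=
  ⟨fun i => ⌊min (x i) (y i)⌋, fun i => ⌈max (x i) (y i)⌉,
    fun _ => ⟨(Int.floor_le _).trans (min_le_left _ _), (le_max_left _ _).trans (Int.le_ceil _)⟩,
    fun _ => ⟨(Int.floor_le _).trans (min_le_right _ _), (le_max_right _ _).trans (Int.le_ceil _)⟩⟩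

theorem intPts_eq_image (P : Set (Fin n → ℝ)) : intPts P = coeZ '' {z | coeZ z ∈ P} := by
  ext x
  constructor
  · rintro ⟨hx, hint⟩
    choose z hz using hint
    have hzx : coeZ z = x := funext fun i => (hz i).symm
    exact ⟨z, by rwa [← hzx] at hx, hzx⟩
  · rintro ⟨z, hz, rfl⟩
    exact ⟨hz, fun i => ⟨z i, rfl⟩⟩

theorem intNbhd_coeZ (z : Fin n → ℤ) : intNbhd (coeZ z) = {z} := by
  ext y
  simp only [intNbhd, coeZ, mem_ofPred_eq, mem_singleton_iff, funext_iff]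
  refine forall_congr' fun i => ?_
  rw [← Int.cast_sub, ← Int.cast_abs, ← Int.cast_one, Int.cast_lt, Int.abs_lt_one_iff,
    sub_eq_zero, eq_comm]

theorem intNbhd_subset_Icc {x : Fin n → ℝ} {l u : Fin n → ℤ} (hx : x ∈ intBox l u) :
    intNbhd x ⊆ Icc l u := by
  intro z hz
  have hl : ∀ i, l i - 1 < z i := fun i => by
    have := abs_lt.1 (hz i)
    exact_mod_cast (by linarith [(hx i).1] : (l i : ℝ) - 1 < z i)
  have hu : ∀ i, z i < u i + 1 := fun i => by
    have := abs_lt.1 (hz i)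
    exact_mod_cast (by linarith [(hx i).2] : (z i : ℝ) < u i + 1)
  exact ⟨fun i => by linarith [hl i], fun i => by linarith [hu i]⟩

theorem abs_intCast_sub_le_one {x w : ℝ} {k : ℤ} (hw : w ∈ Ioo ((⌈x⌉ : ℝ) - 1) (⌊x⌋ + 1))
    (hk : |w - k| < 1) : |(k : ℝ) - x| ≤ 1 := by
  obtain ⟨hk₁, hk₂⟩ := abs_lt.1 hk
  have h₁ : ⌈x⌉ - 2 < k := by exact_mod_cast (by linarith [hw.1] : (⌈x⌉ : ℝ) - 2 < k)
  have h₂ : k < ⌊x⌋ + 2 := by exact_mod_cast (by linarith [hw.2] : (k : ℝ) < ⌊x⌋ + 2)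
  have h₃ : ((⌈x⌉ - 1 : ℤ) : ℝ) ≤ k := by exact_mod_cast (by omega : ⌈x⌉ - 1 ≤ k)
  have h₄ : (k : ℝ) ≤ ((⌊x⌋ + 1 : ℤ) : ℝ) := by exact_mod_cast (by omega : k ≤ ⌊x⌋ + 1)
  push_cast at h₃ h₄
  rw [abs_le]
  constructor <;> linarith [Int.le_ceil x, Int.floor_le x]

theorem convZ_mono {T U : Set (Fin n → ℤ)} (h : T ⊆ U) : convZ T ⊆ convZ U :=
  convexHull_mono (image_mono h)

theorem dotProduct_le_of_mem_convZ {T : Set (Fin n → ℤ)} {a x : Fin n → ℝ} {c : ℝ}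
    (h : ∀ z ∈ T, a ⬝ᵥ coeZ z ≤ c) (hx : x ∈ convZ T) : a ⬝ᵥ x ≤ c :=
  convexHull_min (by rintro _ ⟨z, hz, rfl⟩; exact h z hz)
    (convex_halfSpace_le ⟨dotProduct_add a, fun r v => dotProduct_smul r a v⟩ c) hx

def smallIntVectors (n : ℕ) : Finset (Fin n → ℝ) :=
  (Finset.Icc (-2) 2).image coeZ

theorem coeZ_sub_mem_smallIntVectors {x : Fin n → ℝ} {y z : Fin n → ℤ}
    (hy : ∀ i, |coeZ y i - x i| ≤ 1) (hz : z ∈ intNbhd x) :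
    coeZ y - coeZ z ∈ smallIntVectors n := by
  have hdiff : ∀ i, |y i - z i| ≤ 2 := fun i => by
    have hyi : |(y i : ℝ) - x i| ≤ 1 := hy i
    have hzi : |x i - z i| < 1 := hz i
    have : |(y i : ℝ) - z i| ≤ 2 := (abs_sub_le _ (x i) _).trans (by linarith)
    exact_mod_cast this
  rw [← coeZ_sub]
  exact Finset.mem_image_of_mem _ (Finset.mem_Icc.2
    ⟨fun i => (abs_le.1 (hdiff i)).1, fun i => (abs_le.1 (hdiff i)).2⟩)

end IntegerPoints

section SeparatingNormals

variable {𝕜 : Type*} [Field 𝕜] [LinearOrder 𝕜] [IsStrictOrderedRing 𝕜] {n : ℕ}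

def separatingNormals (G : Finset (Fin n → 𝕜)) : Finset (Fin n → 𝕜) :=
  G.powerset.biUnion fun D => (exists_finset_mem_hull_iff D).choose

theorem exists_mem_separatingNormals {G D : Finset (Fin n → 𝕜)} (hD : D ⊆ G) {v : Fin n → 𝕜}
    (hv : v ∉ PointedCone.hull 𝕜 (D : Set (Fin n → 𝕜))) :
    ∃ a ∈ separatingNormals G, (∀ d ∈ D, a ⬝ᵥ d ≤ 0) ∧ 0 < a ⬝ᵥ v := by
  have hA := (exists_finset_mem_hull_iff D).choose_spec
  rw [hA, not_forall₂] at hv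
  obtain ⟨a, ha, hav⟩ := hv
  exact ⟨a, Finset.mem_biUnion.2 ⟨D, Finset.mem_powerset.2 hD, ha⟩,
    fun d hd => (hA d).1 (PointedCone.subset_hull hd) a ha, not_le.1 hav⟩

end SeparatingNormals

theorem isPolyhedron_of_eq_finset {n : ℕ} {P : Set (Fin n → ℝ)} (N : Finset (Fin n → ℝ))
    (b : (Fin n → ℝ) → ℝ) (hP : P.Nonempty) (h : P = {x | ∀ a ∈ N, a ⬝ᵥ x ≤ b a}) :
    IsPolyhedron P := by
  refine ⟨hP, N.card, Matrix.of fun k => (N.equivFin.symm k : Fin n → ℝ),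
    fun k => b (N.equivFin.symm k), ?_⟩
  rw [h]
  ext x
  simp only [mem_ofPred_eq, Pi.le_def, mulVec, of_apply]
  rw [N.equivFin.symm.forall_congr_left]
  simp

namespace IntegrallyConvex

variable {n : ℕ} {S : Set (Fin n → ℤ)}

theorem coeZ_mem_convZ_iff (hS : IntegrallyConvex S) {z : Fin n → ℤ} :
    coeZ z ∈ convZ S ↔ z ∈ S := by
  refine ⟨fun hz => ?_, fun hz => subset_convexHull ℝ _ (mem_image_of_mem _ hz)⟩
  by_contra hzS
  have := hS.2 _ hz
  rw [intNbhd_coeZ, inter_singleton_eq_empty.2 hzS] at this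
  simp [convZ] at this

theorem convZ_inter_intBox (hS : IntegrallyConvex S) (l u : Fin n → ℤ) :
    convZ S ∩ intBox l u = convZ (S ∩ Icc l u) := by
  refine Subset.antisymm (fun x ⟨hxS, hxB⟩ => ?_) (subset_inter (convZ_mono inter_subset_left) ?_)
  · exact convZ_mono (inter_subset_inter_right _ (intNbhd_subset_Icc hxB)) (hS.2 x hxS)
  · exact convexHull_min (by rintro _ ⟨z, hz, rfl⟩; exact coeZ_mem_intBox.2 hz.2)
      (convex_intBox l u)

theorem isClosed_convZ_inter_intBox (hS : IntegrallyConvex S) (l u : Fin n → ℤ) :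
    IsClosed (convZ S ∩ intBox l u) := by
  rw [hS.convZ_inter_intBox]
  exact (((finite_Icc l u).subset inter_subset_right).image coeZ).isClosed_convexHull (𝕜 := ℝ)

theorem isBoxInteger (hS : IntegrallyConvex S) : IsBoxInteger (convZ S) := by
  intro l u _ _
  have hpts : intPts (convZ S ∩ intBox l u) = coeZ '' (S ∩ Icc l u) := by
    rw [intPts_eq_image]
    congr 1
    ext z
    exact and_congr hS.coeZ_mem_convZ_iff coeZ_mem_intBox
  rw [hpts, hS.convZ_inter_intBox]
  rfl

theorem dotProduct_le_of_forall_near (hS : IntegrallyConvex S) {x : Fin n → ℝ}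
    (hx : x ∈ convZ S) (a : Fin n → ℝ)
    (hnear : ∀ z ∈ S, (∀ i, |coeZ z i - x i| ≤ 1) → a ⬝ᵥ coeZ z ≤ a ⬝ᵥ x)
    {y : Fin n → ℤ} (hy : y ∈ S) : a ⬝ᵥ coeZ y ≤ a ⬝ᵥ x := by
  -- every integer neighbour of a point of the open box `O` is within distance 1 of `x`
  set O : Set (Fin n → ℝ) := univ.pi fun i => Ioo ((⌈x i⌉ : ℝ) - 1) (⌊x i⌋ + 1)
  have hO : O ∈ 𝓝 x := (isOpen_set_pi finite_univ fun _ _ => isOpen_Ioo).mem_nhds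
    fun i _ => ⟨by linarith [Int.ceil_lt_add_one (x i)], Int.lt_floor_add_one _⟩
  have hlim : Tendsto (fun t : ℝ => x + t • (coeZ y - x)) (𝓝[>] 0) (𝓝 x) := by
    have hcont : Continuous fun t : ℝ => x + t • (coeZ y - x) := by fun_prop
    simpa using (hcont.tendsto 0).mono_left nhdsWithin_le_nhds
  obtain ⟨t, ⟨htO, ht₁⟩, ht₀⟩ := (((hlim.eventually_mem hO).and
    (eventually_nhdsWithin_of_eventually_nhds (eventually_lt_nhds one_pos))).and
    self_mem_nhdsWithin).exists
  have hw : x + t • (coeZ y - x) ∈ convZ S := (convex_convexHull ℝ _).add_smul_sub_mem hx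
    (subset_convexHull ℝ _ (mem_image_of_mem _ hy)) ⟨le_of_lt ht₀, ht₁.le⟩
  have haw := dotProduct_le_of_mem_convZ (fun z hz => hnear z hz.1 fun i =>
    abs_intCast_sub_le_one (htO i (mem_univ i)) (hz.2 i)) (hS.2 _ hw)
  rw [dotProduct_add, dotProduct_smul, dotProduct_sub, smul_eq_mul] at haw
  nlinarith [ht₀]

theorem exists_normal_of_forall_add_smul_notMem (hS : IntegrallyConvex S) {x u : Fin n → ℝ}
    (hx : x ∈ convZ S) (hu : ∀ s > (0 : ℝ), x + s • u ∉ convZ S) :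
    ∃ a ∈ separatingNormals (smallIntVectors n),
      (∀ z ∈ S, a ⬝ᵥ coeZ z ≤ a ⬝ᵥ x) ∧ 0 < a ⬝ᵥ u := by
  classical
  obtain ⟨ι, _, z, w, hz, -, hw₀, hw₁, hwz⟩ := eq_pos_convex_span_of_mem_convexHull (hS.2 x hx)
  choose ζ hζ hζz using fun i => hz ⟨i, rfl⟩
  set D := (smallIntVectors n).filter fun d =>
    ∃ y ∈ S, (∀ j, |coeZ y j - x j| ≤ 1) ∧ ∃ i, d = coeZ y - z i
  have hfeas : ∀ d ∈ (D : Set (Fin n → ℝ)), ∃ s > (0 : ℝ), x + s • d ∈ convZ S := by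
    intro d hd
    obtain ⟨-, y, hy, -, i, rfl⟩ := Finset.mem_filter.1 hd
    refine ⟨w i, hw₀ i, ?_⟩
    rw [← hwz]
    exact add_smul_sub_mem_convexHull (s := coeZ '' S) (fun j => ⟨ζ j, (hζ j).1, hζz j⟩)
      (fun j => (hw₀ j).le) hw₁ i (mem_image_of_mem _ hy)
  have huD : u ∉ PointedCone.hull ℝ (D : Set (Fin n → ℝ)) := fun h => by
    obtain ⟨s, hs, hmem⟩ := (convex_convexHull ℝ _).exists_add_smul_mem_of_mem_hull hx hfeas h
    exact hu s hs hmem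
  obtain ⟨a, ha, haD, hau⟩ := exists_mem_separatingNormals (Finset.filter_subset _ _) huD
  refine ⟨a, ha, fun y hy => hS.dotProduct_le_of_forall_near hx a (fun y hy hnear => ?_) hy, hau⟩
  have hle : ∀ i, a ⬝ᵥ coeZ y ≤ a ⬝ᵥ z i := fun i => by
    have hsmall := hζz i ▸ coeZ_sub_mem_smallIntVectors hnear (hζ i).2
    have := haD _ (Finset.mem_filter.2 ⟨hsmall, y, hy, hnear, i, rfl⟩)
    rwa [dotProduct_sub, sub_nonpos] at this
  calc a ⬝ᵥ coeZ y = ∑ i, w i * (a ⬝ᵥ coeZ y) := by rw [← Finset.sum_mul, hw₁, one_mul]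
    _ ≤ ∑ i, w i * (a ⬝ᵥ z i) :=
      Finset.sum_le_sum fun i _ => mul_le_mul_of_nonneg_left (hle i) (hw₀ i).le
    _ = a ⬝ᵥ x := by simp [← hwz, dotProduct_sum, dotProduct_smul]

theorem exists_finset_convZ_eq (hS : IntegrallyConvex S) :
    ∃ (N : Finset (Fin n → ℝ)) (b : (Fin n → ℝ) → ℝ), convZ S = {x | ∀ a ∈ N, a ⬝ᵥ x ≤ b a} := by
  classical
  set values := fun a : Fin n → ℝ => (fun z => a ⬝ᵥ coeZ z) '' S
  refine ⟨(separatingNormals (smallIntVectors n)).filter fun a => BddAbove (values a),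
    fun a => sSup (values a), Subset.antisymm (fun x hx a ha => ?_) fun x hx => ?_⟩
  · exact dotProduct_le_of_mem_convZ
      (fun z hz => le_csSup (Finset.mem_filter.1 ha).2 ⟨z, hz, rfl⟩) hx
  by_contra hxS
  obtain ⟨y, hy⟩ := hS.1
  obtain ⟨l, u, hyB, hxB⟩ := exists_intBox_mem_mem (coeZ y) x
  obtain ⟨x₀, hx₀, τ, hτ, hxτ, hexit⟩ := (convex_convexHull ℝ _).exists_forall_add_smul_notMem
    (convex_intBox l u) (hS.isClosed_convZ_inter_intBox l u)
    (subset_convexHull ℝ _ (mem_image_of_mem _ hy)) hyB hxB hxS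
  obtain ⟨a, ha, hmax, hau⟩ := hS.exists_normal_of_forall_add_smul_notMem hx₀ hexit
  have hbdd : a ⬝ᵥ x₀ ∈ upperBounds (values a) := by
    rintro _ ⟨z, hz, rfl⟩
    exact hmax z hz
  have hxa : a ⬝ᵥ x ≤ sSup (values a) := hx a (Finset.mem_filter.2 ⟨ha, _, hbdd⟩)
  have hsup : sSup (values a) ≤ a ⬝ᵥ x₀ := csSup_le (hS.1.image _) hbdd
  rw [hxτ, dotProduct_add, dotProduct_smul, smul_eq_mul] at hxa
  nlinarith [mul_pos hτ hau]

theorem isPolyhedron (hS : IntegrallyConvex S) : IsPolyhedron (convZ S) := by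
  obtain ⟨N, b, h⟩ := hS.exists_finset_convZ_eq
  obtain ⟨z, hz⟩ := hS.1
  exact isPolyhedron_of_eq_finset N b ⟨coeZ z, subset_convexHull ℝ _ (mem_image_of_mem _ hz)⟩ h

end IntegrallyConvex

/-- If `S ⊆ ℤ^n` is integrally convex, then `conv(S)` is a box-integer
polyhedron and `S = conv(S) ∩ ℤ^n`. -/
theorem integrallyConvex_hull_boxInteger {n : ℕ} (S : Set (Fin n → ℤ))
    (hS : IntegrallyConvex S) :
    IsPolyhedron (convZ S) ∧ IsBoxInteger (convZ S) ∧
    S = {z : Fin n → ℤ | coeZ z ∈ convZ S} :=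
  ⟨hS.isPolyhedron, hS.isBoxInteger, Set.ext fun _ => hS.coeZ_mem_convZ_iff.symm⟩
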